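/- arXiv:1603.09409 — 2 statements merged into one kernel-verified Lean document; each statement's English description precedes it below -/
import Mathlib

section
/- Let (l_j)_{j≥1} be a nonincreasing sequence of positive real numbers with ∑_{j=1}^∞ l_j < ∞, and let V_L(ε) = ∑_{j : l_j ≥ 2ε} 2ε + ∑_{j : l_j < 2ε} l_j for ε > 0. Let σ = inf{ α ∈ ℝ : ∑_j l_j^α < ∞ }. Then for every complex number s with Re(s) > σ, ∑_{j=1}^∞ l_j^s = s · (∑_{j=1}^∞ l_j) · l_1^{s−1} + 2s(1−s) · ∫_0^{l_1/2} V_L(ε) (2ε)^{s−2} dε, where the integral converges absolutely. -/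
/-!
Writing `V_L(ε) = ∑ⱼ min(2ε, lⱼ)`, the integral splits into one elementary integral per length:
for `0 < l ≤ L`, splitting `(0, L/2]` at `l/2` gives
`2s(1-s) ∫₀^{L/2} min(2ε, l) (2ε)^{s-2} dε = l^s - s l L^{s-1}`, and summing over `j` with
`L = l₁` yields the formula. Sum and integral may be interchanged: as `Re s > σ` there is
`0 < γ ≤ 1` with `γ < Re s` and `∑ⱼ lⱼ^γ < ∞`, and `min(x, y) ≤ x^{1-γ} y^γ` dominates the
`j`-th term by `lⱼ^γ (2ε)^{Re s - 1 - γ}`, which is integrable at `0`.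
-/

open MeasureTheory Filter Topology Set

theorem integrable_tsum_and_hasSum_integral_of_norm_le {α ι E : Type*} [MeasurableSpace α]
    {μ : Measure α} [NormedAddCommGroup E] [NormedSpace ℝ E] [CompleteSpace E] [Countable ι]
    {F : ι → α → E} {a : ι → ℝ} {g : α → ℝ}
    (hF : ∀ i, AEStronglyMeasurable (F i) μ) (ha : Summable a) (hg : Integrable g μ)
    (hFg : ∀ i, ∀ᵐ x ∂μ, ‖F i x‖ ≤ a i * g x) :
    Integrable (fun x => ∑' i, F i x) μ
      ∧ HasSum (fun i => ∫ x, F i x ∂μ) (∫ x, ∑' i, F i x ∂μ) := by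
  have hFg' : ∀ᵐ x ∂μ, ∀ i, ‖F i x‖ ≤ a i * g x := ae_all_iff.2 hFg
  have hsum : ∀ᵐ x ∂μ, HasSum (fun i => F i x) (∑' i, F i x) := by
    filter_upwards [hFg'] with x hx
    exact (ha.mul_right (g x)).of_norm_bounded hx |>.hasSum
  have hmeas : AEStronglyMeasurable (fun x => ∑' i, F i x) μ :=
    aestronglyMeasurable_of_tendsto_ae atTop
      (fun s => Finset.aestronglyMeasurable_fun_sum s fun i _ => hF i) hsum
  have hbound : ∀ᵐ x ∂μ, ‖∑' i, F i x‖ ≤ (∑' i, a i) * g x := by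
    filter_upwards [hFg'] with x hx
    rw [← tsum_mul_right]
    exact tsum_of_norm_bounded (ha.mul_right (g x)).hasSum hx
  refine ⟨(hg.const_mul _).mono' hmeas hbound, ?_⟩
  refine hasSum_integral_of_dominated_convergence (fun i x => a i * g x) hF hFg
    (ae_of_all _ fun x => ha.mul_right (g x)) ?_ hsum
  simpa only [tsum_mul_right] using hg.const_mul _

theorem min_le_rpow_mul_rpow {x y γ : ℝ} (hx : 0 < x) (hy : 0 < y) (hγ0 : 0 ≤ γ)
    (hγ1 : γ ≤ 1) : min x y ≤ x ^ (1 - γ) * y ^ γ := by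
  have hm : 0 < min x y := lt_min hx hy
  calc min x y = min x y ^ (1 - γ) * min x y ^ γ := by
        rw [← Real.rpow_add hm, sub_add_cancel, Real.rpow_one]
    _ ≤ x ^ (1 - γ) * y ^ γ := by
        gcongr
        · exact min_le_left _ _
        · exact min_le_right _ _

theorem pos_of_summable_rpow {l : ℕ → ℝ} (hpos : ∀ j, 0 < l j) (hl : Tendsto l atTop (𝓝 0))
    {β : ℝ} (hβ : Summable fun j => l j ^ β) : 0 < β := by
  by_contra! hβ0
  have hone : ∀ᶠ j in atTop, 1 ≤ l j ^ β := by
    filter_upwards [hl.eventually_lt_const one_pos] with j hj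
    exact Real.one_le_rpow_of_pos_of_le_one_of_nonpos (hpos j) hj.le hβ0
  obtain ⟨j, hj1, hj2⟩ := (hone.and (hβ.tendsto_atTop_zero.eventually_lt_const one_pos)).exists
  linarith

theorem exists_summable_rpow_of_sInf_lt {l : ℕ → ℝ} (hpos : ∀ j, 0 < l j) (hsum : Summable l)
    {t : ℝ} (ht : sInf {α : ℝ | Summable fun j => l j ^ α} < t) :
    ∃ γ, 0 < γ ∧ γ ≤ 1 ∧ γ < t ∧ Summable fun j => l j ^ γ := by
  have hone : Summable fun j => l j ^ (1 : ℝ) := by simpa only [Real.rpow_one] using hsum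
  obtain ⟨β, hβ, hβt⟩ := exists_lt_of_csInf_lt ⟨1, hone⟩ ht
  rcases le_total β 1 with hβ1 | hβ1
  · exact ⟨β, pos_of_summable_rpow hpos hsum.tendsto_atTop_zero hβ, hβ1, hβt, hβ⟩
  · exact ⟨1, one_pos, le_rfl, hβ1.trans_lt hβt, hone⟩

theorem mul_card_add_tsum_eq_tsum_min {ι : Type*} {l : ι → ℝ} (hl : ∀ j, 0 ≤ l j)
    (hsum : Summable l) {x : ℝ} (hx : 0 ≤ x) :
    x * Nat.card {j : ι | x ≤ l j} + ∑' j : {j : ι // l j < x}, l j = ∑' j, min x (l j) := by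
  have hmin : Summable fun j => min x (l j) :=
    hsum.of_nonneg_of_le (fun j => le_min hx (hl j)) fun j => min_le_right _ _
  have hlarge : ∑' j : {j : ι | x ≤ l j}, min x (l j) = x * Nat.card {j : ι | x ≤ l j} := by
    rw [tsum_congr fun j : {j : ι | x ≤ l j} => min_eq_left j.2, tsum_const, nsmul_eq_mul,
      mul_comm]
  have hsmall : ∑' j : ↥{j : ι | x ≤ l j}ᶜ, min x (l j) = ∑' j : {j : ι // l j < x}, l j := by
    have hcompl : {j : ι | x ≤ l j}ᶜ = {j : ι | l j < x} := by ext; simp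
    rw [hcompl]
    exact tsum_congr fun j => min_eq_right j.2.le
  rw [← hlarge, ← hsmall, (hmin.subtype _).tsum_add_tsum_compl (hmin.subtype _)]

theorem integrableOn_two_mul_rpow_Ioc {r : ℝ} (hr : -1 < r) (c : ℝ) :
    IntegrableOn (fun ε : ℝ => (2 * ε) ^ r) (Ioc 0 c) := by
  have h := (intervalIntegral.intervalIntegrable_rpow' hr (a := 0) (b := 2 * c)).comp_mul_left
    (c := 2)
  rw [zero_div, mul_div_cancel_left₀ _ two_ne_zero, intervalIntegrable_iff] at h
  exact h.mono_set Ioc_subset_uIoc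

theorem integral_two_mul_cpow {a b : ℝ} {r : ℂ} (h : -1 < r.re ∨ r ≠ -1 ∧ (0 : ℝ) ∉ uIcc a b) :
    ∫ x in a..b, (2 * (x : ℂ)) ^ r
      = ((2 * b : ℂ) ^ (r + 1) - (2 * a : ℂ) ^ (r + 1)) / (2 * (r + 1)) := by
  have h2 : -1 < r.re ∨ r ≠ -1 ∧ (0 : ℝ) ∉ uIcc (2 * a) (2 * b) := by
    refine h.imp_right fun ⟨hr, h0⟩ => ⟨hr, fun h0' => h0 ?_⟩
    rw [Set.mem_uIcc] at h0' ⊢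
    rcases h0' with h0' | h0'
    exacts [Or.inl ⟨by linarith [h0'.1], by linarith [h0'.2]⟩,
      Or.inr ⟨by linarith [h0'.1], by linarith [h0'.2]⟩]
  have := intervalIntegral.integral_comp_mul_left (a := a) (b := b)
    (fun u : ℝ => (u : ℂ) ^ r) two_ne_zero
  simp only [Complex.ofReal_mul, Complex.ofReal_ofNat] at this
  rw [this, integral_cpow h2, Complex.real_smul]
  push_cast
  field_simp

/-- The contribution of a single length `l` to the integrand `V_L(ε) (2ε)^(s-2)`. -/
noncomputable def tubeKernel (s : ℂ) (l ε : ℝ) : ℂ :=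
  (min (2 * ε) l : ℝ) * (2 * (ε : ℂ)) ^ (s - 2)

theorem norm_two_mul_cpow {ε : ℝ} (hε : 0 < ε) (r : ℂ) :
    ‖(2 * (ε : ℂ)) ^ r‖ = (2 * ε) ^ r.re := by
  rw [← Complex.ofReal_ofNat, ← Complex.ofReal_mul,
    Complex.norm_cpow_eq_rpow_re_of_pos (by positivity)]

theorem norm_tubeKernel_le {s : ℂ} {l ε γ : ℝ} (hl : 0 < l) (hε : 0 < ε) (hγ0 : 0 ≤ γ)
    (hγ1 : γ ≤ 1) : ‖tubeKernel s l ε‖ ≤ l ^ γ * (2 * ε) ^ (s.re - 1 - γ) := by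
  have h2ε : 0 < 2 * ε := by positivity
  rw [tubeKernel, norm_mul, norm_two_mul_cpow hε, Complex.norm_real,
    Real.norm_of_nonneg (le_min h2ε.le hl.le)]
  calc min (2 * ε) l * (2 * ε) ^ (s - 2).re
      ≤ (2 * ε) ^ (1 - γ) * l ^ γ * (2 * ε) ^ (s - 2).re := by
        gcongr
        exact min_le_rpow_mul_rpow h2ε hl hγ0 hγ1
    _ = l ^ γ * (2 * ε) ^ (s.re - 1 - γ) := by
        rw [mul_comm ((2 * ε) ^ (1 - γ)), mul_assoc, ← Real.rpow_add h2ε]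
        congr 2
        simp only [Complex.sub_re, Complex.re_ofNat]
        ring

theorem continuousOn_tubeKernel (s : ℂ) (l : ℝ) : ContinuousOn (tubeKernel s l) (Ioi 0) := by
  refine (Complex.continuous_ofReal.comp (by fun_prop)).continuousOn.mul fun ε hε => ?_
  have hlin : ContinuousAt (fun x : ℝ => 2 * (x : ℂ)) ε := by fun_prop
  refine (hlin.cpow continuousAt_const ?_).continuousWithinAt
  rw [← Complex.ofReal_ofNat, ← Complex.ofReal_mul]
  exact Complex.ofReal_mem_slitPlane.2 (mul_pos two_pos hε)

theorem integrableOn_tubeKernel {s : ℂ} (hs : 0 < s.re) {l : ℝ} (hl : 0 < l) (c : ℝ) :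
    IntegrableOn (tubeKernel s l) (Ioc 0 c) := by
  have hmeas : AEStronglyMeasurable (tubeKernel s l) (volume.restrict (Ioc 0 c)) :=
    ((continuousOn_tubeKernel s l).mono Ioc_subset_Ioi_self).aestronglyMeasurable
      measurableSet_Ioc
  refine Integrable.mono'
    ((integrableOn_two_mul_rpow_Ioc (r := s.re - 1) (by linarith) c).const_mul (l ^ (0 : ℝ)))
    hmeas ?_
  filter_upwards [ae_restrict_mem measurableSet_Ioc] with ε hε
  simpa using norm_tubeKernel_le hl hε.1 le_rfl zero_le_one

/-- The factor `2s(1-s)` is multiplied through so that the identity also holds at `s = 1`. -/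
theorem two_mul_mul_one_sub_mul_integral_tubeKernel {s : ℂ} (hs : 0 < s.re) {l L : ℝ}
    (hl : 0 < l) (hlL : l ≤ L) :
    2 * s * (1 - s) * ∫ ε in Ioc 0 (L / 2), tubeKernel s l ε
      = (l : ℂ) ^ s - s * l * (L : ℂ) ^ (s - 1) := by
  rcases eq_or_ne s 1 with rfl | hs1
  · simp
  have hs0 : s ≠ 0 := fun h => by simp [h] at hs
  have hl2 : 0 ≤ l / 2 := by positivity
  have hlL2 : l / 2 ≤ L / 2 := by linarith
  have hinner : ∫ ε in Ioc 0 (l / 2), tubeKernel s l ε = (l : ℂ) ^ s / (2 * s) := by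
    have heq : EqOn (tubeKernel s l) (fun ε : ℝ => (2 * (ε : ℂ)) ^ (s - 2 + 1))
        (Ioc 0 (l / 2)) := by
      intro ε hε
      have h2ε : (2 * (ε : ℂ)) ≠ 0 :=
        mul_ne_zero two_ne_zero (Complex.ofReal_ne_zero.2 hε.1.ne')
      simp only [tubeKernel, min_eq_left (show 2 * ε ≤ l by linarith [hε.2]),
        Complex.cpow_add _ _ h2ε, Complex.cpow_one]
      push_cast
      ring
    rw [setIntegral_congr_fun measurableSet_Ioc heq, ← intervalIntegral.integral_of_le hl2,
      integral_two_mul_cpow (Or.inl (by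
        simp only [Complex.add_re, Complex.sub_re, Complex.re_ofNat, Complex.one_re]; linarith))]
    push_cast
    rw [show s - 2 + 1 + 1 = s by ring, mul_zero, Complex.zero_cpow hs0]
    field_simp
    ring_nf
  have houter : ∫ ε in Ioc (l / 2) (L / 2), tubeKernel s l ε
      = l * ((L : ℂ) ^ (s - 1) - (l : ℂ) ^ (s - 1)) / (2 * (s - 1)) := by
    have heq : EqOn (tubeKernel s l) (fun ε : ℝ => l * (2 * (ε : ℂ)) ^ (s - 2))
        (Ioc (l / 2) (L / 2)) := by
      intro ε hε
      simp only [tubeKernel, min_eq_right (show l ≤ 2 * ε by linarith [hε.1])]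
    have h0 : (0 : ℝ) ∉ uIcc (l / 2) (L / 2) := by
      rw [uIcc_of_le hlL2]
      exact fun h => (h.1.trans_lt' (by positivity)).false
    rw [setIntegral_congr_fun measurableSet_Ioc heq, ← intervalIntegral.integral_of_le hlL2,
      intervalIntegral.integral_const_mul,
      integral_two_mul_cpow (Or.inr ⟨fun h => hs1 (by linear_combination h), h0⟩)]
    push_cast
    rw [show s - 2 + 1 = s - 1 by ring]
    field_simp
  have hpow : (l : ℂ) ^ s = l * (l : ℂ) ^ (s - 1) := by
    conv_lhs => rw [show s = 1 + (s - 1) by ring]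
    rw [Complex.cpow_add _ _ (Complex.ofReal_ne_zero.2 hl.ne'), Complex.cpow_one]
  rw [← Ioc_union_Ioc_eq_Ioc hl2 hlL2,
    setIntegral_union (Ioc_disjoint_Ioc_of_le (le_refl (l / 2))) measurableSet_Ioc
      (integrableOn_tubeKernel hs hl _)
      ((integrableOn_tubeKernel hs hl _).mono_set (Ioc_subset_Ioc_left hl2)), hinner, houter, hpow]
  field_simp
  ring

/-- For a real fractal string with lengths `(l_j)` (nonincreasing, summable),
inner tube volume `V_L(ε) = ∑_{l_j ≥ 2ε} 2ε + ∑_{l_j < 2ε} l_j`, and abscissa of convergence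
`σ`, one has, for every complex `s` with `Re(s) > σ`:
`∑_j l_j^s = s (∑_j l_j) l_1^{s-1} + 2s(1-s) ∫_0^{l_1/2} V_L(ε) (2ε)^{s-2} dε`,
the integral converging absolutely. -/
theorem real_string_zeta_eq_tube_integral (l : ℕ → ℝ) (hpos : ∀ j, 0 < l j)
    (hmono : Antitone l) (hsum : Summable l)
    (V : ℝ → ℝ)
    (hV : ∀ ε : ℝ, 0 < ε →
      V ε = 2 * ε * (Nat.card {j : ℕ | 2 * ε ≤ l j} : ℝ)
        + ∑' j : {j : ℕ // l j < 2 * ε}, l j.1)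
    (σ : ℝ) (hσ : σ = sInf {α : ℝ | Summable fun j => l j ^ α})
    (s : ℂ) (hs : σ < s.re) :
    IntegrableOn (fun ε : ℝ => (V ε : ℂ) * (2 * (ε : ℂ)) ^ (s - 2))
        (Set.Ioc 0 (l 0 / 2)) volume
      ∧ ∑' j, (l j : ℂ) ^ s
          = s * ((∑' j, l j : ℝ) : ℂ) * (l 0 : ℂ) ^ (s - 1)
            + 2 * s * (1 - s)
              * ∫ ε in Set.Ioc 0 (l 0 / 2), (V ε : ℂ) * (2 * (ε : ℂ)) ^ (s - 2) := by
  obtain ⟨γ, hγ0, hγ1, hγs, hγsum⟩ := exists_summable_rpow_of_sInf_lt hpos hsum (hσ ▸ hs)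
  have hs0 : 0 < s.re := hγ0.trans hγs
  have hVk : EqOn (fun ε : ℝ => (V ε : ℂ) * (2 * (ε : ℂ)) ^ (s - 2))
      (fun ε => ∑' j, tubeKernel s (l j) ε) (Ioc 0 (l 0 / 2)) := fun ε hε => by
    dsimp only
    rw [hV ε hε.1, mul_card_add_tsum_eq_tsum_min (fun j => (hpos j).le) hsum (by linarith [hε.1]),
      Complex.ofReal_tsum, ← tsum_mul_right]
    rfl
  obtain ⟨hint, hhas⟩ := integrable_tsum_and_hasSum_integral_of_norm_le
    (fun j => (integrableOn_tubeKernel hs0 (hpos j) _).aestronglyMeasurable) hγsum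
    (integrableOn_two_mul_rpow_Ioc (r := s.re - 1 - γ) (by linarith) (l 0 / 2))
    fun j => (ae_restrict_mem measurableSet_Ioc).mono fun ε hε =>
      norm_tubeKernel_le (hpos j) hε.1 hγ0.le hγ1
  refine ⟨IntegrableOn.congr_fun hint hVk.symm measurableSet_Ioc, ?_⟩
  have hterm : ∀ j, (l j : ℂ) ^ s = 2 * s * (1 - s) * (∫ ε in Ioc 0 (l 0 / 2), tubeKernel s (l j) ε)
      + s * (l 0 : ℂ) ^ (s - 1) * l j := fun j => by
    rw [two_mul_mul_one_sub_mul_integral_tubeKernel hs0 (hpos j) (hmono j.zero_le)]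
    ring
  rw [setIntegral_congr_fun measurableSet_Ioc hVk, tsum_congr hterm, ((hhas.mul_left _).add
    ((Complex.hasSum_ofReal.2 hsum.hasSum).mul_left _)).tsum_eq]
  ring
end

section
/- Let p be a prime and let ℰ_p = ⋃_{n=0}^∞ (a_n + p^n ℤ_p) be the p-adic Euler string, with a_0 = 0 and a_n = a_{n−1} + p^{n−2}; let β = ⋃_{n=0}^∞ S(a_n, p^{−n}) be its metric boundary, N_ε = {x ∈ ℰ_p : dist(x, β) < ε}, and V(ε) = μ_H(N_ε \ β). Then for every real ε with 0 < ε ≤ 1, V(ε) = p^{−⌊log_p(1/ε)⌋} / (p(p−1)), where ⌊·⌋ is the floor function and log_p denotes the logarithm to base p. -/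
open MeasureTheory

noncomputable instance padicMeasurableSpace (p : ℕ) [Fact p.Prime] : MeasurableSpace ℚ_[p] :=
  borel _

instance padicBorelSpace (p : ℕ) [Fact p.Prime] : BorelSpace ℚ_[p] := ⟨rfl⟩

/-- The closed unit ball `ℤ_p = {x : ℚ_p | |x|_p ≤ 1}` of `ℚ_p`, as a positive compact set. -/
noncomputable def padicUnitBall (p : ℕ) [Fact p.Prime] :
    TopologicalSpace.PositiveCompacts ℚ_[p] where
  carrier := Metric.closedBall 0 1
  isCompact' := isCompact_closedBall 0 1
  interior_nonempty' :=
    ⟨0, mem_interior_iff_mem_nhds.mpr (Metric.closedBall_mem_nhds 0 one_pos)⟩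

/-- The Haar measure `μ_H` on the additive group `ℚ_p`, normalized so that
`μ_H(ℤ_p) = 1`. -/
noncomputable def padicHaar (p : ℕ) [Fact p.Prime] : Measure ℚ_[p] :=
  Measure.addHaarMeasure (padicUnitBall p)

/-!
The balls `a_m + p^m ℤ_p` are separated: `|a_m - a_n|_p = p^{1 - min(m, n)}` exceeds both
radii. Since all triangles in an ultrametric space are isosceles, `ℰ_p \ β` is the disjoint union
of the open balls `B(a_m, p^{-m}) = a_m + p^{m+1} ℤ_p`, and every point of `B(a_m, p^{-m})` lies
at distance exactly `p^{-m}` from `β`. Hence `N_ε \ β` is the union of those balls with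
`p^{-m} < ε`, i.e. with `m > ⌊log_p(1/ε)⌋`, and their volumes `p^{-m-1}` form a geometric series.
The volume of `p^n ℤ_p` is `p^{-n}`: multiplication by `p` scales Haar measure by a constant,
and splitting `ℤ_p` into its `p` residue classes modulo `p` shows that this constant is `1/p`.
-/

open MeasureTheory Metric Function
open scoped Pointwise NNReal ENNReal

namespace IsUltrametricDist

variable {X : Type*} [PseudoMetricSpace X] [IsUltrametricDist X]

lemma dist_eq_of_dist_lt {x y z : X} (h : dist x y < dist y z) : dist x z = dist y z := by
  rw [dist_eq_max_of_dist_ne_dist x y z h.ne, max_eq_right h.le]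

lemma dist_eq_of_mem_ball_of_mem_sphere {x y c : X} {r : ℝ} (hx : x ∈ ball c r)
    (hy : y ∈ sphere c r) : dist x y = r := by
  rw [mem_sphere, dist_comm] at hy
  rw [dist_eq_of_dist_lt (hy ▸ mem_ball.mp hx), hy]

lemma dist_eq_of_dist_lt_of_dist_lt {x y c c' : X} (hx : dist x c < dist c c')
    (hy : dist y c' < dist c c') : dist x y = dist c c' := by
  have hxc' : dist x c' = dist c c' := dist_eq_of_dist_lt hx
  rw [← hxc', dist_comm x y, dist_comm x c']
  exact dist_eq_of_dist_lt (by rwa [dist_comm c' x, hxc'])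

lemma dist_eq_of_strictAnti {a : ℕ → X} (ha : StrictAnti fun n ↦ dist (a n) (a (n + 1)))
    {m n : ℕ} (hmn : m < n) : dist (a m) (a n) = dist (a m) (a (m + 1)) := by
  induction n, hmn using Nat.le_induction with
  | base => rfl
  | succ n hmn ih =>
    have hlt : dist (a (n + 1)) (a n) < dist (a n) (a m) := by
      rw [dist_comm (a (n + 1)), dist_comm (a n) (a m), ih]
      exact ha hmn
    rw [dist_comm, dist_eq_of_dist_lt hlt, dist_comm, ih]

variable {ι : Type*} {c : ι → X} {r : ι → ℝ}

lemma dist_eq_of_mem_ball_of_mem_closedBall (hsep : ∀ i j, i ≠ j → r i < dist (c i) (c j))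
    {i j : ι} (hij : i ≠ j) {x y : X} (hx : x ∈ ball (c i) (r i))
    (hy : y ∈ closedBall (c j) (r j)) : dist x y = dist (c i) (c j) :=
  dist_eq_of_dist_lt_of_dist_lt ((mem_ball.mp hx).trans (hsep i j hij))
    ((mem_closedBall.mp hy).trans_lt (dist_comm (c i) (c j) ▸ hsep j i hij.symm))

lemma disjoint_ball_closedBall (hsep : ∀ i j, i ≠ j → r i < dist (c i) (c j)) {i j : ι}
    (hij : i ≠ j) : Disjoint (ball (c i) (r i)) (closedBall (c j) (r j)) := by
  refine Set.disjoint_left.mpr fun x hxi hxj ↦ ?_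
  have hdist := dist_eq_of_mem_ball_of_mem_closedBall hsep hij hxi hxj
  rw [dist_self] at hdist
  linarith [hsep i j hij, dist_nonneg (x := x) (y := c i), mem_ball.mp hxi]

lemma pairwise_disjoint_ball (hsep : ∀ i j, i ≠ j → r i < dist (c i) (c j)) :
    Pairwise (Disjoint on fun i ↦ ball (c i) (r i)) :=
  fun _ _ hij ↦ (disjoint_ball_closedBall hsep hij).mono_right ball_subset_closedBall

lemma iUnion_closedBall_diff_iUnion_sphere (hsep : ∀ i j, i ≠ j → r i < dist (c i) (c j)) :
    (⋃ i, closedBall (c i) (r i)) \ (⋃ i, sphere (c i) (r i)) = ⋃ i, ball (c i) (r i) := by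
  ext x
  simp only [Set.mem_sdiff, Set.mem_iUnion, not_exists]
  constructor
  · rintro ⟨⟨i, hi⟩, hx⟩
    exact ⟨i, lt_of_le_of_ne (mem_closedBall.mp hi) (hx i)⟩
  · rintro ⟨i, hi⟩
    refine ⟨⟨i, ball_subset_closedBall hi⟩, fun j hj ↦ ?_⟩
    rcases eq_or_ne i j with rfl | hij
    · exact (mem_ball.mp hi).ne (mem_sphere.mp hj)
    · exact Set.disjoint_left.mp (disjoint_ball_closedBall hsep hij) hi
        (sphere_subset_closedBall hj)

lemma infDist_iUnion_sphere (hsep : ∀ i j, i ≠ j → r i < dist (c i) (c j)) {i : ι}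
    (hne : (sphere (c i) (r i)).Nonempty) {x : X} (hx : x ∈ ball (c i) (r i)) :
    infDist x (⋃ j, sphere (c j) (r j)) = r i := by
  obtain ⟨y, hy⟩ := hne
  refine le_antisymm ((dist_eq_of_mem_ball_of_mem_sphere hx hy) ▸
    infDist_le_dist_of_mem (Set.mem_iUnion_of_mem i hy)) ?_
  rw [← not_lt, infDist_lt_iff ⟨y, Set.mem_iUnion_of_mem i hy⟩]
  rintro ⟨z, hz, hlt⟩
  obtain ⟨j, hj⟩ := Set.mem_iUnion.mp hz
  rcases eq_or_ne i j with rfl | hij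
  · exact hlt.ne (dist_eq_of_mem_ball_of_mem_sphere hx hj)
  · rw [dist_eq_of_mem_ball_of_mem_closedBall hsep hij hx (sphere_subset_closedBall hj)] at hlt
    exact (hsep i j hij).not_gt hlt

end IsUltrametricDist

/-- The set `N_ε \ β` whose measure is the thin tube volume `V(ε)`. -/
def thinInnerTube {X : Type*} [PseudoMetricSpace X] (E β : Set X) (ε : ℝ) : Set X :=
  {x ∈ E | infDist x β < ε} \ β

lemma thinInnerTube_iUnion_closedBall {X ι : Type*} [PseudoMetricSpace X] [IsUltrametricDist X]
    {c : ι → X} {r : ι → ℝ} (hsep : ∀ i j, i ≠ j → r i < dist (c i) (c j))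
    (hne : ∀ i, (sphere (c i) (r i)).Nonempty) (ε : ℝ) :
    thinInnerTube (⋃ i, closedBall (c i) (r i)) (⋃ i, sphere (c i) (r i)) ε
      = ⋃ i, ⋃ (_ : r i < ε), ball (c i) (r i) := by
  have hdiff := IsUltrametricDist.iUnion_closedBall_diff_iUnion_sphere hsep
  ext x
  constructor
  · rintro ⟨⟨hE, hdist⟩, hβ⟩
    obtain ⟨i, hi⟩ :=
      Set.mem_iUnion.mp (hdiff ▸ ⟨hE, hβ⟩ : x ∈ ⋃ i, ball (c i) (r i))
    exact Set.mem_iUnion₂.mpr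
      ⟨i, IsUltrametricDist.infDist_iUnion_sphere hsep (hne i) hi ▸ hdist, hi⟩
  · intro hx
    obtain ⟨i, hr, hi⟩ := Set.mem_iUnion₂.mp hx
    obtain ⟨hE, hβ⟩ := hdiff.symm ▸ Set.mem_iUnion_of_mem i hi
    exact ⟨⟨hE, by rwa [IsUltrametricDist.infDist_iUnion_sphere hsep (hne i) hi]⟩, hβ⟩

lemma zpow_neg_lt_iff_floor_logb_lt {b ε : ℝ} (hb : 1 < b) (hε : 0 < ε) (m : ℤ) :
    b ^ (-m) < ε ↔ ⌊Real.logb b ε⁻¹⌋ < m := by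
  rw [Int.floor_lt, Real.logb_lt_iff_lt_rpow hb (inv_pos.mpr hε), Real.rpow_intCast, zpow_neg,
    inv_lt_comm₀ (zpow_pos (by linarith) m) hε]

lemma hasSum_zpow_neg_nat_add {b : ℝ} (hb : 1 < b) (k : ℕ) :
    HasSum (fun i : ℕ ↦ b ^ (-((i + (k + 1) : ℕ) : ℤ) - 1))
      (b ^ (-(k : ℤ)) / (b * (b - 1))) := by
  have hb0 : b ≠ 0 := by positivity
  have hterm : ∀ i : ℕ,
      b ^ (-((i + (k + 1) : ℕ) : ℤ) - 1) = b ^ (-(k : ℤ) - 2) * b⁻¹ ^ i := by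
    intro i
    rw [inv_pow, ← zpow_natCast, ← zpow_neg, ← zpow_add₀ hb0]
    congr 1
    push_cast
    ring
  have hsum : b ^ (-(k : ℤ)) / (b * (b - 1)) = b ^ (-(k : ℤ) - 2) * (1 - b⁻¹)⁻¹ := by
    rw [zpow_sub₀ hb0]
    field_simp
  simp_rw [hterm, hsum]
  exact (hasSum_geometric_of_lt_one (by positivity) (inv_lt_one_of_one_lt₀ hb)).mul_left _

namespace Padic

variable {p : ℕ} [Fact p.Prime]

lemma one_lt_p : (1 : ℝ) < p := Nat.one_lt_cast.mpr (Fact.out : p.Prime).one_lt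

lemma ball_zpow_eq_closedBall (c : ℚ_[p]) (n : ℤ) :
    ball c ((p : ℝ) ^ n) = closedBall c ((p : ℝ) ^ (n - 1)) := by
  ext x
  rw [mem_ball, mem_closedBall, dist_eq_norm, norm_le_pow_iff_norm_lt_pow_add_one, sub_add_cancel]

lemma sphere_zpow_nonempty (c : ℚ_[p]) (n : ℤ) : (sphere c ((p : ℝ) ^ n)).Nonempty :=
  ⟨c + (p : ℚ_[p]) ^ (-n), by
    rw [mem_sphere, dist_eq_norm, add_sub_cancel_left, norm_p_zpow, neg_neg]⟩

lemma eq_of_dist_natCast_lt_one {i j : ℕ} (hi : i < p) (hj : j < p)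
    (h : dist (i : ℚ_[p]) j < 1) : i = j := by
  have hdvd : (p : ℤ) ∣ (i : ℤ) - j :=
    norm_intCast_lt_one_iff.mp (by push_cast; rwa [← dist_eq_norm])
  have := Int.eq_zero_of_abs_lt_dvd hdvd (by rw [abs_lt]; omega)
  omega

lemma closedBall_zero_one_eq_biUnion :
    closedBall (0 : ℚ_[p]) 1
      = ⋃ j ∈ Finset.range p, closedBall (j : ℚ_[p]) (p : ℝ)⁻¹ := by
  ext x
  simp only [mem_closedBall, Set.mem_iUnion, Finset.mem_range, exists_prop, dist_eq_norm,
    sub_zero]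
  constructor
  · intro hx
    obtain ⟨j, hj, hmem⟩ := PadicInt.exists_mem_range (⟨x, hx⟩ : ℤ_[p])
    have hlt : ‖x - j‖ < 1 := PadicInt.mem_nonunits.mp hmem
    exact ⟨j, hj, by simpa using (norm_le_pow_iff_norm_lt_pow_add_one _ (-1)).mpr (by simpa)⟩
  · rintro ⟨j, -, hx⟩
    calc ‖x‖ = ‖(x - j) + j‖ := by rw [sub_add_cancel]
      _ ≤ max ‖x - j‖ ‖(j : ℚ_[p])‖ := nonarchimedean _ _
      _ ≤ 1 := max_le (hx.trans (inv_le_one_of_one_le₀ one_lt_p.le))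
          (by exact_mod_cast norm_int_le_one (j : ℤ))

lemma pairwiseDisjoint_closedBall_natCast :
    (Finset.range p : Set ℕ).PairwiseDisjoint
      fun j ↦ closedBall (j : ℚ_[p]) (p : ℝ)⁻¹ := by
  intro i hi j hj hij
  refine Set.disjoint_left.mpr fun x hxi hxj ↦ hij (eq_of_dist_natCast_lt_one
    (Finset.mem_range.mp hi) (Finset.mem_range.mp hj) ?_)
  rw [mem_closedBall, dist_comm] at hxi
  rw [mem_closedBall] at hxj
  have hp : (p : ℝ)⁻¹ < 1 := inv_lt_one_of_one_lt₀ one_lt_p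
  exact (dist_triangle_max _ x _).trans_lt (max_lt (hxi.trans_lt hp) (hxj.trans_lt hp))

lemma zpow_smul_closedBall_zero_one (n : ℤ) :
    Units.mk0 (p : ℚ_[p]) (NeZero.ne _) ^ n • closedBall (0 : ℚ_[p]) 1
      = closedBall 0 ((p : ℝ) ^ (-n)) := by
  change ((Units.mk0 (p : ℚ_[p]) (NeZero.ne _) ^ n : ℚ_[p]ˣ) : ℚ_[p]) • closedBall 0 1 = _
  rw [Units.val_zpow_eq_zpow_val, Units.val_mk0, smul_closedBall' (zpow_ne_zero _ (NeZero.ne _)),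
    smul_zero, norm_p_zpow, mul_one]

instance : (padicHaar p).IsAddHaarMeasure := by
  unfold padicHaar; infer_instance

instance : (padicHaar p).Regular := by
  unfold padicHaar; infer_instance

lemma padicHaar_closedBall_zero_one : padicHaar p (closedBall 0 1) = 1 :=
  Measure.addHaarMeasure_self

lemma distribHaarChar_p :
    distribHaarChar ℚ_[p] (Units.mk0 (p : ℚ_[p]) (NeZero.ne _)) = (p : ℝ≥0)⁻¹ := by
  set u := Units.mk0 (p : ℚ_[p]) (NeZero.ne _)
  have hsplit : (p : ℝ≥0∞) * distribHaarChar ℚ_[p] u = 1 := by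
    calc (p : ℝ≥0∞) * distribHaarChar ℚ_[p] u
        = p * padicHaar p (u ^ (1 : ℤ) • closedBall 0 1) := by
          rw [← distribHaarChar_mul, zpow_one, padicHaar_closedBall_zero_one, mul_one]
      _ = p * padicHaar p (closedBall 0 (p : ℝ)⁻¹) := by
          rw [zpow_smul_closedBall_zero_one, zpow_neg_one]
      _ = ∑ j ∈ Finset.range p, padicHaar p (closedBall (j : ℚ_[p]) (p : ℝ)⁻¹) := by
          simp [Measure.addHaar_closedBall_center]
      _ = 1 := by
          rw [← measure_biUnion_finset pairwiseDisjoint_closedBall_natCast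
            fun _ _ ↦ measurableSet_closedBall, ← closedBall_zero_one_eq_biUnion,
            padicHaar_closedBall_zero_one]
  refine eq_inv_of_mul_eq_one_right (ENNReal.coe_eq_one.mp ?_)
  rwa [ENNReal.coe_mul, ENNReal.coe_natCast]

lemma padicHaar_closedBall (c : ℚ_[p]) (n : ℤ) :
    padicHaar p (closedBall c ((p : ℝ) ^ n)) = ENNReal.ofReal ((p : ℝ) ^ n) := by
  have hscale := zpow_smul_closedBall_zero_one (p := p) (-n)
  rw [neg_neg] at hscale
  rw [Measure.addHaar_closedBall_center, ← hscale, ← distribHaarChar_mul,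
    padicHaar_closedBall_zero_one, mul_one, map_zpow, distribHaarChar_p,
    ← ENNReal.ofReal_coe_nnreal]
  push_cast
  rw [zpow_neg, inv_zpow, inv_inv]

lemma padicHaar_ball (c : ℚ_[p]) (n : ℤ) :
    padicHaar p (ball c ((p : ℝ) ^ n)) = ENNReal.ofReal ((p : ℝ) ^ (n - 1)) := by
  rw [ball_zpow_eq_closedBall, padicHaar_closedBall]

variable {a : ℕ → ℚ_[p]}

lemma dist_eulerString
    (hrec : ∀ n : ℕ, 1 ≤ n → a n = a (n - 1) + (p : ℚ_[p]) ^ ((n : ℤ) - 2))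
    {m n : ℕ} (hmn : m < n) : dist (a m) (a n) = (p : ℝ) ^ (1 - (m : ℤ)) := by
  have hstep : ∀ n : ℕ, dist (a n) (a (n + 1)) = (p : ℝ) ^ (1 - (n : ℤ)) := by
    intro n
    rw [hrec (n + 1) n.succ_pos, Nat.add_sub_cancel, dist_comm, dist_eq_norm, add_sub_cancel_left,
      norm_p_zpow]
    congr 1
    push_cast
    ring
  rw [IsUltrametricDist.dist_eq_of_strictAnti ?_ hmn, hstep]
  intro i j hij
  simp only [hstep]
  exact zpow_lt_zpow_right₀ one_lt_p (by omega)

lemma zpow_neg_lt_dist_eulerString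
    (hrec : ∀ n : ℕ, 1 ≤ n → a n = a (n - 1) + (p : ℚ_[p]) ^ ((n : ℤ) - 2))
    (m n : ℕ) (hmn : m ≠ n) : (p : ℝ) ^ (-(m : ℤ)) < dist (a m) (a n) := by
  rcases hmn.lt_or_gt with h | h
  · rw [dist_eulerString hrec h]
    exact zpow_lt_zpow_right₀ one_lt_p (by omega)
  · rw [dist_comm, dist_eulerString hrec h]
    exact zpow_lt_zpow_right₀ one_lt_p (by omega)

end Padic

theorem padic_euler_string_tube_volume_general (p : ℕ) [Fact p.Prime]
    (a : ℕ → ℚ_[p])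
    (hrec : ∀ n : ℕ, 1 ≤ n → a n = a (n - 1) + (p : ℚ_[p]) ^ ((n : ℤ) - 2))
    (ε : ℝ) (hε : 0 < ε) (hε1 : ε ≤ 1) :
    padicHaar p
        ({x ∈ ⋃ m : ℕ, Metric.closedBall (a m) ((p : ℝ) ^ (-(m : ℤ))) |
            Metric.infDist x (⋃ m : ℕ, Metric.sphere (a m) ((p : ℝ) ^ (-(m : ℤ)))) < ε}
          \ ⋃ m : ℕ, Metric.sphere (a m) ((p : ℝ) ^ (-(m : ℤ))))
      = ENNReal.ofReal
          ((p : ℝ) ^ (-⌊Real.logb p (1 / ε)⌋) / ((p : ℝ) * ((p : ℝ) - 1))) := by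
  have hp : (1 : ℝ) < p := Padic.one_lt_p
  have hsep := Padic.zpow_neg_lt_dist_eulerString hrec
  obtain ⟨k, hk⟩ : ∃ k : ℕ, ⌊Real.logb p (1 / ε)⌋ = k := Int.eq_ofNat_of_zero_le
    (Int.floor_nonneg.mpr (Real.logb_nonneg hp (one_le_one_div hε hε1)))
  have hcond : ∀ m : ℕ, (p : ℝ) ^ (-(m : ℤ)) < ε ↔ m ≥ k + 1 := fun m ↦ by
    rw [zpow_neg_lt_iff_floor_logb_lt hp hε, ← one_div, hk]
    omega
  change padicHaar p (thinInnerTube _ _ ε) = _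
  rw [thinInnerTube_iUnion_closedBall hsep fun m ↦ Padic.sphere_zpow_nonempty _ _]
  simp_rw [hcond]
  rw [Set.iUnion_ge_eq_iUnion_nat_add, measure_iUnion
    ((IsUltrametricDist.pairwise_disjoint_ball hsep).comp_of_injective (add_left_injective _))
    fun _ ↦ measurableSet_ball]
  simp_rw [Padic.padicHaar_ball]
  have hsum := hasSum_zpow_neg_nat_add hp k
  rw [← ENNReal.ofReal_tsum_of_nonneg (fun _ ↦ by positivity) hsum.summable, hsum.tsum_eq, hk]

/-- Let `ℰ_p = ⋃_n (a_n + p^n ℤ_p)` be the p-adic Euler string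
(`a_0 = 0`, `a_n = a_{n-1} + p^{n-2}`), with metric boundary `β = ⋃_n S(a_n, p^{-n})`,
thick inner ε-neighborhood `N_ε` and thin tube volume `V(ε) = μ_H(N_ε \ β)`. Then for
`0 < ε ≤ 1`, `V(ε) = p^{-⌊log_p(1/ε)⌋} / (p(p-1))`. -/
theorem padic_euler_string_tube_volume (p : ℕ) [Fact p.Prime]
    (a : ℕ → ℚ_[p]) (h0 : a 0 = 0)
    (hrec : ∀ n : ℕ, 1 ≤ n → a n = a (n - 1) + (p : ℚ_[p]) ^ ((n : ℤ) - 2))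
    (ε : ℝ) (hε : 0 < ε) (hε1 : ε ≤ 1) :
    padicHaar p
        ({x ∈ ⋃ m : ℕ, Metric.closedBall (a m) ((p : ℝ) ^ (-(m : ℤ))) |
            Metric.infDist x (⋃ m : ℕ, Metric.sphere (a m) ((p : ℝ) ^ (-(m : ℤ)))) < ε}
          \ ⋃ m : ℕ, Metric.sphere (a m) ((p : ℝ) ^ (-(m : ℤ))))
      = ENNReal.ofReal
          ((p : ℝ) ^ (-⌊Real.logb p (1 / ε)⌋) / ((p : ℝ) * ((p : ℝ) - 1))) :=
  padic_euler_string_tube_volume_general p a hrec ε hε hε1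
end
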